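/- arXiv:0810.1554 — 8 statements merged into one kernel-verified Lean document; each statement's English description precedes it below -/
import Mathlib

section
/- Let N ≥ 1, let A = diag(a_1, …, a_N) be a real diagonal N×N matrix, let y ∈ ℝ^N, let μ ∈ ℝ, and let λ ∈ ℝ with λ ≠ a_i for every i. Then λ is an eigenvalue of the real symmetric matrix A + μ·y yᵀ (i.e. det(λ·I_N − A − μ·y yᵀ) = 0) if and only if λ satisfies the secular equation 1 − μ · Σ_{i=1}^N y_i²/(λ − a_i) = 0. -/
/-! With `D = diag(λ - aᵢ)`, which is invertible because `λ ≠ aᵢ`, the matrix is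
`D + (-μ y) yᵀ = D (I + D⁻¹(-μ y) yᵀ)`, so the matrix determinant lemma gives
`det = (∏ᵢ (λ - aᵢ)) · (1 - μ ∑ᵢ yᵢ² / (λ - aᵢ))`, and the first factor is nonzero. -/

open Matrix

theorem Matrix.det_diagonal_add_vecMulVec {K n : Type*} [Field K] [Fintype n] [DecidableEq n]
    {d : n → K} (hd : ∀ i, d i ≠ 0) (u v : n → K) :
    (diagonal d + vecMulVec u v).det = (∏ i, d i) * (1 + ∑ i, u i * v i / d i) := by
  have hfactor :
      diagonal d + vecMulVec u v = diagonal d * (1 + vecMulVec (fun i ↦ u i / d i) v) := by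
    rw [mul_add, Matrix.mul_one]
    congr 1
    ext i j
    rw [diagonal_mul, vecMulVec_apply, vecMulVec_apply, ← mul_assoc, mul_div_cancel₀ _ (hd i)]
  rw [hfactor, det_mul, det_diagonal, vecMulVec_eq (Fin 1),
    det_one_add_replicateCol_mul_replicateRow, dotProduct]
  congr 2
  exact Finset.sum_congr rfl fun i _ ↦ by ring

theorem stmt_1_general (N : ℕ) (a y : Fin N → ℝ) (μ lam : ℝ)
    (hlam : ∀ i, lam ≠ a i) :
    (lam • (1 : Matrix (Fin N) (Fin N) ℝ) - Matrix.diagonal a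
        - μ • Matrix.vecMulVec y y).det = 0
      ↔ 1 - μ * ∑ i, y i ^ 2 / (lam - a i) = 0 := by
  have hd : ∀ i, lam - a i ≠ 0 := fun i ↦ sub_ne_zero.mpr (hlam i)
  have hsplit : lam • (1 : Matrix (Fin N) (Fin N) ℝ) - diagonal a - μ • vecMulVec y y
      = diagonal (fun i ↦ lam - a i) + vecMulVec (-(μ • y)) y := by
    rw [smul_one_eq_diagonal, diagonal_sub, sub_eq_add_neg, ← smul_vecMulVec, ← neg_vecMulVec]
  have hsecular : 1 + ∑ i, (-(μ • y)) i * y i / (lam - a i)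
      = 1 - μ * ∑ i, y i ^ 2 / (lam - a i) := by
    rw [sub_eq_add_neg, Finset.mul_sum, ← Finset.sum_neg_distrib]
    congr 1
    refine Finset.sum_congr rfl fun i _ ↦ ?_
    rw [Pi.neg_apply, Pi.smul_apply, smul_eq_mul]
    ring
  rw [hsplit, det_diagonal_add_vecMulVec hd, hsecular, mul_eq_zero,
    or_iff_right (Finset.prod_ne_zero_iff.mpr fun i _ ↦ hd i)]

theorem stmt_1 (N : ℕ) (hN : 1 ≤ N) (a y : Fin N → ℝ) (μ lam : ℝ)
    (hlam : ∀ i, lam ≠ a i) :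
    (lam • (1 : Matrix (Fin N) (Fin N) ℝ) - Matrix.diagonal a
        - μ • Matrix.vecMulVec y y).det = 0
      ↔ 1 - μ * ∑ i, y i ^ 2 / (lam - a i) = 0 :=
  stmt_1_general N a y μ lam hlam
end

section
/- Let N ≥ 1, let a_1 > a_2 > ⋯ > a_N be real numbers, let μ > 0, and let y ∈ ℝ^N with y_i ≠ 0 for every i. Then the real symmetric matrix diag(a_1, …, a_N) + μ·y yᵀ has N distinct real eigenvalues λ_1 > λ_2 > ⋯ > λ_N, and they strictly interlace with the a_i in the sense that λ_1 > a_1 > λ_2 > a_2 > ⋯ > λ_N > a_N. -/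
/-!
By the matrix determinant lemma the characteristic polynomial of `diag(a) + μ y yᵀ` is
`p(x) = ∏ⱼ (x - aⱼ) - μ ∑ᵢ yᵢ² ∏_{j ≠ i} (x - aⱼ)`, so `p(aₖ) = -μ yₖ² ∏_{j ≠ k} (aₖ - aⱼ)`,
which is nonzero with sign `(-1)^(k+1)` (with `k` counted from `0`). Since `p` is monic, the
intermediate value theorem gives a root above `a₀` and one in each gap `(aₖ₊₁, aₖ)`; these are
`N` distinct roots of a polynomial of degree `N`, hence all of them.
-/

open Matrix Polynomial Finset

namespace Matrix

variable {ι : Type*} [Fintype ι] [DecidableEq ι]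

theorem det_diagonal_add_vecMulVec_of_isUnit {R : Type*} [CommRing R] {d : ι → R}
    (hd : ∀ i, IsUnit (d i)) (u v : ι → R) :
    det (diagonal d + vecMulVec u v) = ∏ i, d i + ∑ i, u i * v i * ∏ j ∈ univ.erase i, d j := by
  have hfactor : diagonal d + vecMulVec u v = diagonal d *
      (1 + replicateCol Unit (fun i => Ring.inverse (d i) * u i) * replicateRow Unit v) := by
    rw [← vecMulVec_eq, Matrix.mul_add, Matrix.mul_one, mul_vecMulVec]
    congr 2
    ext i
    rw [mulVec_diagonal, ← mul_assoc, Ring.mul_inverse_cancel _ (hd i), one_mul]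
  rw [hfactor, det_mul, det_one_add_replicateCol_mul_replicateRow, det_diagonal, mul_add,
    mul_one, dotProduct, Finset.mul_sum]
  refine congrArg _ (Finset.sum_congr rfl fun i _ => ?_)
  rw [← Finset.mul_prod_erase _ _ (mem_univ i)]
  calc (d i * ∏ j ∈ univ.erase i, d j) * (v i * (Ring.inverse (d i) * u i))
      = (d i * Ring.inverse (d i)) * (u i * v i * ∏ j ∈ univ.erase i, d j) := by ring
    _ = _ := by rw [Ring.mul_inverse_cancel _ (hd i), one_mul]

theorem det_diagonal_add_vecMulVec_of_ne_zero {R : Type*} [CommRing R] [IsDomain R] {d : ι → R}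
    (hd : ∀ i, d i ≠ 0) (u v : ι → R) :
    det (diagonal d + vecMulVec u v) = ∏ i, d i + ∑ i, u i * v i * ∏ j ∈ univ.erase i, d j := by
  let φ := algebraMap R (FractionRing R)
  apply IsFractionRing.injective R (FractionRing R)
  have hmap : φ.mapMatrix (diagonal d + vecMulVec u v)
      = diagonal (φ ∘ d) + vecMulVec (φ ∘ u) (φ ∘ v) := by
    ext i j; simp [diagonal_apply, vecMulVec_apply, apply_ite φ]
  rw [RingHom.map_det, hmap, det_diagonal_add_vecMulVec_of_isUnit]
  · simp [φ, map_prod, map_sum]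
  · simpa [φ] using hd

theorem charmatrix_diagonal_add_vecMulVec {R : Type*} [CommRing R] (a u v : ι → R) :
    charmatrix (diagonal a + vecMulVec u v)
      = diagonal (fun i => X - C (a i)) + vecMulVec (fun i => -C (u i)) (fun i => C (v i)) := by
  ext i j
  by_cases h : i = j
  · subst h; simp [charmatrix_apply_eq, vecMulVec_apply]; ring
  · simp [charmatrix_apply_ne _ _ _ h, diagonal_apply_ne _ h, vecMulVec_apply]

theorem charpoly_diagonal_add_vecMulVec {R : Type*} [CommRing R] [IsDomain R] (a u v : ι → R) :
    (diagonal a + vecMulVec u v).charpoly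
      = ∏ i, (X - C (a i)) - ∑ i, C (u i * v i) * ∏ j ∈ univ.erase i, (X - C (a j)) := by
  rw [charpoly, charmatrix_diagonal_add_vecMulVec,
    det_diagonal_add_vecMulVec_of_ne_zero (fun i => X_sub_C_ne_zero (a i)), sub_eq_add_neg,
    ← Finset.sum_neg_distrib]
  simp [C_mul]

theorem eval_charpoly_diagonal_add_vecMulVec {R : Type*} [CommRing R] [IsDomain R]
    (a u v : ι → R) (k : ι) :
    (diagonal a + vecMulVec u v).charpoly.eval (a k)
      = -(u k * v k * ∏ j ∈ univ.erase k, (a k - a j)) := by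
  rw [charpoly_diagonal_add_vecMulVec, eval_sub, eval_prod,
    Finset.prod_eq_zero (mem_univ k) (by simp), eval_finsetSum, Finset.sum_eq_single k]
  · simp [eval_prod]
  · intro i _ hik
    rw [eval_mul, eval_prod,
      Finset.prod_eq_zero (mem_erase.mpr ⟨Ne.symm hik, mem_univ k⟩) (by simp), mul_zero]
  · simp

end Matrix

theorem StrictAnti.neg_one_pow_mul_prod_erase_sub_pos {N : ℕ} {a : Fin N → ℝ}
    (ha : StrictAnti a) (k : Fin N) : 0 < (-1) ^ (k : ℕ) * ∏ j ∈ univ.erase k, (a k - a j) := by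
  have hsplit : univ.erase k = Iio k ∪ Ioi k := by
    ext j
    simp only [mem_erase, mem_union, mem_Iio, mem_Ioi, mem_univ, and_true]
    exact ne_iff_lt_or_gt
  have hneg : ∏ j ∈ Iio k, (a k - a j) = (-1) ^ (k : ℕ) * ∏ j ∈ Iio k, (a j - a k) := by
    rw [← Fin.card_Iio k, ← prod_neg]; simp
  rw [hsplit, prod_union (disjoint_left.mpr fun j h1 h2 => (mem_Iio.mp h1).asymm (mem_Ioi.mp h2)),
    hneg, ← mul_assoc, ← mul_assoc, ← pow_add, Even.neg_one_pow ⟨_, rfl⟩, one_mul]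
  exact mul_pos (prod_pos fun j hj => sub_pos.mpr (ha (mem_Iio.mp hj)))
    (prod_pos fun j hj => sub_pos.mpr (ha (mem_Ioi.mp hj)))

theorem exists_mem_Ioo_eq_zero_of_mul_neg {f : ℝ → ℝ} (hf : Continuous f) {u v : ℝ}
    (huv : u ≤ v) (h : f u * f v < 0) : ∃ x ∈ Set.Ioo u v, f x = 0 := by
  rcases mul_neg_iff.mp h with ⟨hu, hv⟩ | ⟨hu, hv⟩
  · exact intermediate_value_Ioo' huv hf.continuousOn ⟨hv, hu⟩
  · exact intermediate_value_Ioo huv hf.continuousOn ⟨hu, hv⟩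

namespace Polynomial

theorem exists_eq_of_isRoot_of_injective {R ι : Type*} [CommRing R] [IsDomain R] [Fintype ι]
    {p : R[X]} (hp : p ≠ 0) (hdeg : p.natDegree ≤ Fintype.card ι) {r : ι → R}
    (hr : Function.Injective r) (hroot : ∀ i, p.IsRoot (r i)) {x : R} (hx : p.IsRoot x) :
    ∃ i, x = r i := by
  have hle : univ.val.map r ≤ p.roots :=
    (Multiset.le_iff_subset (univ.nodup.map hr)).mpr fun z hz => by
      obtain ⟨i, -, rfl⟩ := Multiset.mem_map.mp hz
      exact (mem_roots hp).mpr (hroot i)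
  have heq := Multiset.eq_of_le_of_card_le hle (by simpa using (card_roots' p).trans hdeg)
  obtain ⟨i, -, hi⟩ := Multiset.mem_map.mp (heq ▸ (mem_roots hp).mpr hx)
  exact ⟨i, hi.symm⟩

theorem exists_gt_isRoot_of_eval_neg {p : ℝ[X]} (hp : p.Monic) (hdeg : 0 < p.natDegree) {u : ℝ}
    (hu : p.eval u < 0) : ∃ x, u < x ∧ p.IsRoot x := by
  have htend : Filter.Tendsto (fun x => p.eval x) Filter.atTop Filter.atTop :=
    p.tendsto_atTop_of_leadingCoeff_nonneg
      (by rw [degree_eq_natDegree hp.ne_zero]; exact_mod_cast hdeg)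
      (by rw [hp.leadingCoeff]; exact zero_le_one)
  obtain ⟨v, hv, huv⟩ := ((htend.eventually_gt_atTop 0).and (Filter.eventually_ge_atTop u)).exists
  obtain ⟨x, hx, hx0⟩ :=
    exists_mem_Ioo_eq_zero_of_mul_neg p.continuous huv (mul_neg_of_neg_of_pos hu hv)
  exact ⟨x, hx.1, hx0⟩

theorem exists_strictAnti_roots_interlacing {N : ℕ} {p : ℝ[X]} (hp : p.Monic)
    (hdeg : p.natDegree = N) {a : Fin N → ℝ} (ha : StrictAnti a)
    (hsign : ∀ k : Fin N, (-1) ^ (k : ℕ) * p.eval (a k) < 0) :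
    ∃ lam : Fin N → ℝ, StrictAnti lam ∧ (∀ x, p.IsRoot x ↔ ∃ i, x = lam i) ∧
      (∀ i, a i < lam i) ∧ ∀ i : Fin N, ∀ h : (i : ℕ) + 1 < N, lam ⟨(i : ℕ) + 1, h⟩ < a i := by
  cases N with
  | zero =>
    refine ⟨finZeroElim, fun i => i.elim0, fun x => ?_, fun i => i.elim0, fun i => i.elim0⟩
    simp [eq_one_of_monic_natDegree_zero hp hdeg]
  | succ n =>
    obtain ⟨top, htop, htop_root⟩ := exists_gt_isRoot_of_eval_neg hp (by omega)
      (by simpa using hsign 0)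
    have hgap (i : Fin n) : ∃ x ∈ Set.Ioo (a i.succ) (a i.castSucc), p.IsRoot x := by
      have h₁ := hsign i.castSucc
      have h₂ := hsign i.succ
      simp only [Fin.val_castSucc, Fin.val_succ, pow_succ] at h₁ h₂
      have hprod : p.eval (a i.succ) * p.eval (a i.castSucc) < 0 := by
        rcases neg_one_pow_eq_or ℝ (i : ℕ) with h | h <;> rw [h] at h₁ h₂ <;> nlinarith
      exact exists_mem_Ioo_eq_zero_of_mul_neg p.continuous (ha i.castSucc_lt_succ).le hprod
    choose gap hgap_mem hgap_root using hgap
    let lam : Fin (n + 1) → ℝ := Fin.cons top gap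
    have hlam_root (i : Fin (n + 1)) : p.IsRoot (lam i) := by
      cases i using Fin.cases
      exacts [htop_root, hgap_root _]
    have hlam_gt (i : Fin (n + 1)) : a i < lam i := by
      cases i using Fin.cases
      exacts [htop, (hgap_mem _).1]
    have hlam_succ_lt (i : Fin n) : lam i.succ < a i.castSucc := by
      simpa [lam] using (hgap_mem i).2
    have hanti : StrictAnti lam := Fin.strictAnti_iff_succ_lt.mpr fun i =>
      (hlam_succ_lt i).trans (hlam_gt i.castSucc)
    refine ⟨lam, hanti, fun x => ⟨fun hx => ?_, ?_⟩, hlam_gt, fun i h => ?_⟩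
    · exact exists_eq_of_isRoot_of_injective hp.ne_zero (by simp [hdeg]) hanti.injective
        hlam_root hx
    · rintro ⟨i, rfl⟩
      exact hlam_root i
    · exact hlam_succ_lt ⟨i, by omega⟩

end Polynomial

theorem stmt_2_general (N : ℕ) (a y : Fin N → ℝ) (μ : ℝ) (hμ : 0 < μ)
    (ha : StrictAnti a) (hy : ∀ i, y i ≠ 0) :
    ∃ lam : Fin N → ℝ,
      StrictAnti lam ∧
      (∀ x : ℝ,
        (x • (1 : Matrix (Fin N) (Fin N) ℝ)
            - (Matrix.diagonal a + μ • Matrix.vecMulVec y y)).det = 0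
          ↔ ∃ i, x = lam i) ∧
      (∀ i, a i < lam i) ∧
      (∀ i : Fin N, ∀ h : (i : ℕ) + 1 < N, lam ⟨(i : ℕ) + 1, h⟩ < a i) := by
  set M := diagonal a + μ • vecMulVec y y
  have hM : M = diagonal a + vecMulVec (μ • y) y := by rw [smul_vecMulVec]
  have hsign (k : Fin N) : (-1) ^ (k : ℕ) * M.charpoly.eval (a k) < 0 := by
    have hprod := ha.neg_one_pow_mul_prod_erase_sub_pos k
    have hweight : 0 < μ * (y k * y k) := mul_pos hμ (mul_self_pos.mpr (hy k))
    rw [hM, eval_charpoly_diagonal_add_vecMulVec, Pi.smul_apply, smul_eq_mul]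
    calc _ = -(μ * (y k * y k) * ((-1) ^ (k : ℕ) * ∏ j ∈ univ.erase k, (a k - a j))) := by ring
      _ < 0 := neg_neg_of_pos (mul_pos hweight hprod)
  obtain ⟨lam, hanti, hroots, hgt, hlt⟩ := exists_strictAnti_roots_interlacing (charpoly_monic M)
    ((charpoly_natDegree_eq_dim M).trans (Fintype.card_fin N)) ha hsign
  refine ⟨lam, hanti, fun x => ?_, hgt, hlt⟩
  rw [← hroots x, IsRoot, eval_charpoly, scalar_apply, smul_one_eq_diagonal]

theorem stmt_2 (N : ℕ) (hN : 1 ≤ N) (a y : Fin N → ℝ) (μ : ℝ) (hμ : 0 < μ)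
    (ha : StrictAnti a) (hy : ∀ i, y i ≠ 0) :
    ∃ lam : Fin N → ℝ,
      StrictAnti lam ∧
      (∀ x : ℝ,
        (x • (1 : Matrix (Fin N) (Fin N) ℝ)
            - (Matrix.diagonal a + μ • Matrix.vecMulVec y y)).det = 0
          ↔ ∃ i, x = lam i) ∧
      (∀ i, a i < lam i) ∧
      (∀ i : Fin N, ∀ h : (i : ℕ) + 1 < N, lam ⟨(i : ℕ) + 1, h⟩ < a i) :=
  stmt_2_general N a y μ hμ ha hy
end

section
/- Let J > 0 and c > 0 be real numbers, and consider the averaged secular equation of the shifted mean Gaussian ensemble, 1 = (c/J) · ∫_{−J}^{J} (J/π)·(1 − x²/J²)^{1/2} / (λ − x) dx, as an equation for λ in the range λ > J. If c > 1, then this equation has a unique solution with λ > J, namely λ = (J/2)·(c + 1/c). If 0 < c ≤ 1, then the equation has no solution with λ > J. -/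
/-!
The Stieltjes transform of the semicircle density is explicit: for `λ > J`,
`∫ ρ^W(x) / (λ - x) dx = λ - √(λ² - J²)`, obtained by rescaling to `[-1, 1]` and an elementary
primitive. The secular equation thus reads `c (λ - √(λ² - J²)) = J`, i.e.
`c √(λ² - J²) = c λ - J`. Squaring gives `λ = J/2 (c + 1/c)`, and then
`c λ - J = J (c² - 1) / 2`, which must be positive: this is where `c > 1` is forced.
-/

open Real Set

section SemicirclePrimitive

variable {a x : ℝ}

lemma one_sub_sq_moebius (hax : a - x ≠ 0) :
    1 - ((a * x - 1) / (a - x)) ^ 2 = (a ^ 2 - 1) * (1 - x ^ 2) / (a - x) ^ 2 := by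
  field_simp
  ring

lemma hasDerivAt_arcsin_moebius (ha : 1 < a) (hx : x ∈ Ioo (-1 : ℝ) 1) :
    HasDerivAt (fun y => arcsin ((a * y - 1) / (a - y)))
      (√(a ^ 2 - 1) / ((a - x) * √(1 - x ^ 2))) x := by
  obtain ⟨hx₁, hx₂⟩ := hx
  have hax : 0 < a - x := by linarith
  have ha2 : 0 < a ^ 2 - 1 := by nlinarith
  have h1x : 0 < 1 - x ^ 2 := by nlinarith
  have hg : HasDerivAt (fun y => (a * y - 1) / (a - y)) ((a ^ 2 - 1) / (a - x) ^ 2) x := by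
    refine ((((hasDerivAt_id' x).const_mul a).sub_const 1).div
      ((hasDerivAt_id' x).const_sub a) hax.ne').congr_deriv ?_
    ring
  have hpos : 0 < 1 - ((a * x - 1) / (a - x)) ^ 2 := by
    rw [one_sub_sq_moebius hax.ne']
    positivity
  have hsqrt : √(1 - ((a * x - 1) / (a - x)) ^ 2) = √(a ^ 2 - 1) * √(1 - x ^ 2) / (a - x) := by
    rw [one_sub_sq_moebius hax.ne', sqrt_div' _ (sq_nonneg _), sqrt_mul ha2.le, sqrt_sq hax.le]
  have hne₁ : (a * x - 1) / (a - x) ≠ -1 := fun h => by simp [h] at hpos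
  have hne₂ : (a * x - 1) / (a - x) ≠ 1 := fun h => by simp [h] at hpos
  refine ((hasDerivAt_arcsin hne₁ hne₂).comp x hg).congr_deriv ?_
  rw [hsqrt]
  field_simp
  exact (sq_sqrt ha2.le).symm

/-- A primitive of `√(1 - x²) / (a - x)` on `[-1, 1]` for `a > 1`: writing
`1 - x² = (a - x)(a + x) - (a² - 1)` splits the integrand into `(a + x) / √(1 - x²)` and
`√(a² - 1)` times the derivative of `arcsin ((a x - 1) / (a - x))`. -/
noncomputable def semicirclePrimitive (a x : ℝ) : ℝ :=
  -√(1 - x ^ 2) + a * arcsin x - √(a ^ 2 - 1) * arcsin ((a * x - 1) / (a - x))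

lemma hasDerivAt_semicirclePrimitive (ha : 1 < a) (hx : x ∈ Ioo (-1 : ℝ) 1) :
    HasDerivAt (semicirclePrimitive a) (√(1 - x ^ 2) / (a - x)) x := by
  obtain ⟨hx₁, hx₂⟩ := hx
  have hax : 0 < a - x := by linarith
  have h1x : 0 < 1 - x ^ 2 := by nlinarith
  have hsqrt : HasDerivAt (fun y => √(1 - y ^ 2)) (-(2 * x) / (2 * √(1 - x ^ 2))) x := by
    simpa using ((hasDerivAt_pow 2 x).const_sub 1).sqrt h1x.ne'
  refine ((hsqrt.neg.add ((hasDerivAt_arcsin hx₁.ne' hx₂.ne).const_mul a)).sub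
    ((hasDerivAt_arcsin_moebius ha ⟨hx₁, hx₂⟩).const_mul (√(a ^ 2 - 1)))).congr_deriv ?_
  have hx_sq := sq_sqrt h1x.le
  have ha_sq := sq_sqrt (show 0 ≤ a ^ 2 - 1 by nlinarith)
  field_simp
  linear_combination -ha_sq - hx_sq

lemma continuousOn_semicirclePrimitive (ha : 1 < a) :
    ContinuousOn (semicirclePrimitive a) (Icc (-1) 1) := by
  have hax : ∀ x ∈ Icc (-1 : ℝ) 1, a - x ≠ 0 := fun x hx => by linarith [hx.2]
  unfold semicirclePrimitive
  fun_prop (disch := assumption)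

lemma semicirclePrimitive_one (ha : a ≠ 1) :
    semicirclePrimitive a 1 = (a - √(a ^ 2 - 1)) * (π / 2) := by
  have : (a * 1 - 1) / (a - 1) = 1 := by
    rw [mul_one]; exact div_self (sub_ne_zero.mpr ha)
  simp only [semicirclePrimitive, this, one_pow, sub_self, sqrt_zero, arcsin_one]
  ring

lemma semicirclePrimitive_neg_one (ha : a ≠ -1) :
    semicirclePrimitive a (-1) = -((a - √(a ^ 2 - 1)) * (π / 2)) := by
  have : (a * -1 - 1) / (a - -1) = -1 := by
    rw [div_eq_iff (sub_ne_zero.mpr ha)]; ring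
  simp only [semicirclePrimitive, this, neg_one_sq, sub_self, sqrt_zero, arcsin_neg, arcsin_one]
  ring

lemma integral_sqrt_one_sub_sq_div_sub (ha : 1 < a) :
    ∫ x in (-1 : ℝ)..1, √(1 - x ^ 2) / (a - x) = π * (a - √(a ^ 2 - 1)) := by
  have hcont : ContinuousOn (fun x => √(1 - x ^ 2) / (a - x)) (uIcc (-1) 1) := by
    have hax : ∀ x ∈ uIcc (-1 : ℝ) 1, a - x ≠ 0 := fun x hx => by
      rw [uIcc_of_le (by norm_num)] at hx; linarith [hx.2]
    fun_prop (disch := assumption)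
  rw [intervalIntegral.integral_eq_sub_of_hasDeriv_right_of_le (by norm_num)
    (continuousOn_semicirclePrimitive ha)
    (fun x hx => (hasDerivAt_semicirclePrimitive ha hx).hasDerivWithinAt)
    (hcont.intervalIntegrable), semicirclePrimitive_one ha.ne',
    semicirclePrimitive_neg_one (by linarith)]
  ring

end SemicirclePrimitive

lemma integral_semicircle_div_sub {J lam : ℝ} (hJ : 0 < J) (hl : J < lam) :
    ∫ x in (-J)..J, J / π * √(1 - x ^ 2 / J ^ 2) / (lam - x) = lam - √(lam ^ 2 - J ^ 2) := by
  have ha : 1 < lam / J := (one_lt_div hJ).mpr hl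
  have hscale : ∀ t, J / π * √(1 - (J * t) ^ 2 / J ^ 2) / (lam - J * t) =
      π⁻¹ * (√(1 - t ^ 2) / (lam / J - t)) := fun t => by
    rw [show (J * t) ^ 2 / J ^ 2 = t ^ 2 by field_simp,
      show lam - J * t = J * (lam / J - t) by field_simp]
    field_simp
  have hsqrt : √((lam / J) ^ 2 - 1) = √(lam ^ 2 - J ^ 2) / J := by
    rw [show (lam / J) ^ 2 - 1 = (lam ^ 2 - J ^ 2) / J ^ 2 by field_simp,
      sqrt_div' _ (sq_nonneg J), sqrt_sq hJ.le]
  calc ∫ x in (-J)..J, J / π * √(1 - x ^ 2 / J ^ 2) / (lam - x)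
      = J * ∫ t in (-1 : ℝ)..1, J / π * √(1 - (J * t) ^ 2 / J ^ 2) / (lam - J * t) := by
        rw [← smul_eq_mul, intervalIntegral.smul_integral_comp_mul_left
          (fun x => J / π * √(1 - x ^ 2 / J ^ 2) / (lam - x))]
        simp
    _ = J * (π⁻¹ * (π * (lam / J - √((lam / J) ^ 2 - 1)))) := by
        simp_rw [hscale]
        rw [intervalIntegral.integral_const_mul, integral_sqrt_one_sub_sq_div_sub ha]
    _ = lam - √(lam ^ 2 - J ^ 2) := by
        rw [hsqrt]
        field_simp

lemma secular_eq_iff {J c lam : ℝ} (hJ : 0 < J) (hc : 0 < c) (hl : J < lam) :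
    1 = c / J * (lam - √(lam ^ 2 - J ^ 2)) ↔ 1 < c ∧ lam = J / 2 * (c + 1 / c) := by
  have hs_sq : √(lam ^ 2 - J ^ 2) ^ 2 = lam ^ 2 - J ^ 2 := sq_sqrt (by nlinarith)
  constructor
  · intro h
    have hs : 0 < √(lam ^ 2 - J ^ 2) := sqrt_pos.mpr (by nlinarith)
    have hcs : c * √(lam ^ 2 - J ^ 2) = c * lam - J := by
      field_simp at h
      linarith
    have hlam : lam = J / 2 * (c + 1 / c) := by
      have : 2 * c * J * lam = J ^ 2 * (c ^ 2 + 1) := by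
        linear_combination (c * √(lam ^ 2 - J ^ 2) + c * lam - J) * hcs - c ^ 2 * hs_sq
      field_simp
      exact mul_left_cancel₀ hJ.ne' (by linear_combination this)
    refine ⟨?_, hlam⟩
    have : 0 < J * (c ^ 2 - 1) / 2 := by
      rw [show J * (c ^ 2 - 1) / 2 = c * √(lam ^ 2 - J ^ 2) by rw [hcs, hlam]; field_simp; ring]
      exact mul_pos hc hs
    have hc2 : 1 < c ^ 2 := by nlinarith
    nlinarith
  · rintro ⟨hc1, rfl⟩
    have : √((J / 2 * (c + 1 / c)) ^ 2 - J ^ 2) = J / 2 * (c - 1 / c) := by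
      rw [show (J / 2 * (c + 1 / c)) ^ 2 - J ^ 2 = (J / 2 * (c - 1 / c)) ^ 2 by field_simp; ring]
      refine sqrt_sq (mul_nonneg (by positivity) (sub_nonneg.mpr ?_))
      rw [div_le_iff₀ hc]
      nlinarith
    rw [this]
    field_simp
    ring

theorem stmt_5 (J c : ℝ) (hJ : 0 < J) (hc : 0 < c) :
    (1 < c →
      (J < J / 2 * (c + 1 / c) ∧
        1 = c / J * ∫ x in (-J)..J,
            (J / π) * Real.sqrt (1 - x ^ 2 / J ^ 2) / (J / 2 * (c + 1 / c) - x) ∧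
        ∀ lam : ℝ, J < lam →
          1 = c / J * (∫ x in (-J)..J,
              (J / π) * Real.sqrt (1 - x ^ 2 / J ^ 2) / (lam - x)) →
          lam = J / 2 * (c + 1 / c))) ∧
    (c ≤ 1 → ∀ lam : ℝ, J < lam →
      1 ≠ c / J * ∫ x in (-J)..J,
          (J / π) * Real.sqrt (1 - x ^ 2 / J ^ 2) / (lam - x)) := by
  have hsecular : ∀ lam, J < lam →
      (1 = c / J * ∫ x in (-J)..J, J / π * √(1 - x ^ 2 / J ^ 2) / (lam - x) ↔
        1 < c ∧ lam = J / 2 * (c + 1 / c)) := fun lam hl => by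
    rw [integral_semicircle_div_sub hJ hl]
    exact secular_eq_iff hJ hc hl
  refine ⟨fun hc1 => ?_, fun hc1 lam hl h => ?_⟩
  · have hl : J < J / 2 * (c + 1 / c) := by
      field_simp
      nlinarith
    exact ⟨hl, (hsecular _ hl).2 ⟨hc1, rfl⟩, fun lam hl h => ((hsecular lam hl).1 h).2⟩
  · linarith [((hsecular lam hl).1 h).1]
end

section
/- Let b > 0 be a real number, and consider the averaged secular equation of the rank-one spiked Wishart ensemble, 1 = b · ∫_{0}^{4} (1/(π√y))·(1 − y/4)^{1/2} / (z − y) dy, as an equation for z in the range z > 4. If b > 2, then this equation has a unique solution with z > 4, namely z = b²/(b − 1). If 0 < b ≤ 2, then the equation has no solution with z > 4. -/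
/-!
For `z > 4` the Cauchy transform of the Marčenko–Pastur law is
`∫₀⁴ ρ(y) / (z - y) dy = (1 - c) / 2` with `c = √(1 - 4/z) ∈ (0, 1)`, obtained from an explicit
primitive whose derivative is nonnegative (which also yields integrability of the singular
integrand). The secular equation thus becomes `b (1 - c) = 2`: it has no solution for `b ≤ 2`,
and for `b > 2` it forces `c = (b - 2)/b`, i.e. `z = b² / (b - 1)`.
-/

open Real

noncomputable def marchenkoPasturDensity (y : ℝ) : ℝ := 1 / (π * √y) * √(1 - y / 4)

/-- With `u = 4 sin² θ` this is `(θ - c · arctan (c tan θ)) / π`, rewritten via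
`arctan (c tan θ) = θ - arctan ((1 - c) sin θ cos θ / (cos² θ + c sin² θ))` so that it stays
continuous at `u = 4`. -/
noncomputable def marchenkoPasturPrimitive (c u : ℝ) : ℝ :=
  ((1 - c) * arcsin (√u / 2)
    + c * arctan ((1 - c) * (√u * √(4 - u)) / (4 - (1 - c) * u))) / π

lemma hasDerivAt_arcsin_sqrt_div_two {y : ℝ} (hy₀ : 0 < y) (hy₄ : y < 4) :
    HasDerivAt (fun u => arcsin (√u / 2)) (1 / (2 * √y * √(4 - y))) y := by
  have hs : 0 < √y := sqrt_pos.2 hy₀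
  have ht : 0 < √(4 - y) := sqrt_pos.2 (by linarith)
  have hs1 : √y / 2 < 1 := by nlinarith [sq_sqrt hy₀.le]
  have hsqrt : √(1 - (√y / 2) ^ 2) = √(4 - y) / 2 := by
    rw [div_pow, sq_sqrt hy₀.le, show 1 - y / 2 ^ 2 = (4 - y) / 2 ^ 2 by ring,
      sqrt_div' _ (by positivity), sqrt_sq zero_le_two]
  refine (hasDerivAt_arcsin (by linarith) hs1.ne).comp y
    ((hasDerivAt_sqrt hy₀.ne').div_const 2) |>.congr_deriv ?_
  rw [hsqrt]
  field_simp

lemma hasDerivAt_arctan_mul_sqrt_mul_sqrt_div {c y : ℝ} (hc : 0 ≤ c) (hy₀ : 0 < y)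
    (hy₄ : y < 4) :
    HasDerivAt (fun u => arctan ((1 - c) * (√u * √(4 - u)) / (4 - (1 - c) * u)))
      ((1 - c) * (√(4 - y) ^ 2 - c * √y ^ 2) /
        (2 * √y * √(4 - y) * (√(4 - y) ^ 2 + c ^ 2 * √y ^ 2))) y := by
  set s := √y with hs_def
  set t := √(4 - y) with ht_def
  have hs : 0 < s := sqrt_pos.2 hy₀
  have ht : 0 < t := sqrt_pos.2 (by linarith)
  have hst : s ^ 2 + t ^ 2 = 4 := by rw [sq_sqrt hy₀.le, sq_sqrt (by linarith)]; ring
  have hD : 4 - (1 - c) * y = t ^ 2 + c * s ^ 2 := by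
    rw [sq_sqrt hy₀.le, sq_sqrt (by linarith)]; ring
  have hDpos : 0 < t ^ 2 + c * s ^ 2 := by positivity
  have dS : HasDerivAt (√·) (1 / (2 * s)) y := hasDerivAt_sqrt hy₀.ne'
  have dT : HasDerivAt (fun u => √(4 - u)) (-1 / (2 * t)) y :=
    ((hasDerivAt_id' y).const_sub 4).sqrt (by linarith)
  have dD : HasDerivAt (fun u => 4 - (1 - c) * u) (-(1 - c)) y := by
    simpa using ((hasDerivAt_id y).const_mul (1 - c)).const_sub 4
  have dW := ((dS.mul dT).const_mul (1 - c)).div dD (by rw [hD]; exact hDpos.ne')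
  refine (hasDerivAt_arctan _).comp y dW |>.congr_deriv ?_
  simp only [Pi.div_apply, Pi.mul_apply, hD, ← hs_def, ← ht_def]
  have hnum : (t ^ 2 - s ^ 2) * (t ^ 2 + c * s ^ 2) + 2 * (1 - c) * s ^ 2 * t ^ 2
      = 4 * (t ^ 2 - c * s ^ 2) := by linear_combination (t ^ 2 - c * s ^ 2) * hst
  have hden : (t ^ 2 + c * s ^ 2) ^ 2 + (1 - c) ^ 2 * s ^ 2 * t ^ 2
      = 4 * (t ^ 2 + c ^ 2 * s ^ 2) := by
    linear_combination (t ^ 2 + c ^ 2 * s ^ 2) * hst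
  have e1 : 1 + ((1 - c) * (s * t) / (t ^ 2 + c * s ^ 2)) ^ 2
      = 4 * (t ^ 2 + c ^ 2 * s ^ 2) / (t ^ 2 + c * s ^ 2) ^ 2 := by
    rw [← hden]; field_simp
  have e2 : (1 - c) * (1 / (2 * s) * t + s * (-1 / (2 * t))) * (t ^ 2 + c * s ^ 2)
      - (1 - c) * (s * t) * -(1 - c) = (1 - c) * (4 * (t ^ 2 - c * s ^ 2)) / (2 * s * t) := by
    rw [← hnum]; field_simp; ring
  rw [e1, e2]
  field_simp

lemma hasDerivAt_marchenkoPasturPrimitive {c z y : ℝ} (hc : 0 ≤ c) (hcz : c ^ 2 * z = z - 4)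
    (hy₀ : 0 < y) (hy₄ : y < 4) :
    HasDerivAt (marchenkoPasturPrimitive c) (marchenkoPasturDensity y / (z - y)) y := by
  have ht : 0 < √(4 - y) := sqrt_pos.2 (by linarith)
  have hsqrt : √(1 - y / 4) = √(4 - y) / 2 := by
    rw [show 1 - y / 4 = (4 - y) / 2 ^ 2 by ring, sqrt_div' _ (by positivity), sqrt_sq zero_le_two]
  have hzy : (z - y) * (1 - c ^ 2) = √(4 - y) ^ 2 + c ^ 2 * √y ^ 2 := by
    rw [sq_sqrt hy₀.le, sq_sqrt (by linarith)]; linear_combination -hcz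
  have hc2 : 1 - c ^ 2 ≠ 0 := by
    intro h; rw [h, mul_zero] at hzy; nlinarith
  refine (((hasDerivAt_arcsin_sqrt_div_two hy₀ hy₄).const_mul (1 - c)).add
    ((hasDerivAt_arctan_mul_sqrt_mul_sqrt_div hc hy₀ hy₄).const_mul c)).div_const π
    |>.congr_deriv ?_
  rw [marchenkoPasturDensity, hsqrt, eq_div_of_mul_eq hc2 hzy]
  field_simp
  ring

lemma continuousOn_marchenkoPasturPrimitive {c : ℝ} (hc : 0 < c) :
    ContinuousOn (marchenkoPasturPrimitive c) (Set.Icc 0 4) := by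
  have hD : ∀ u ∈ Set.Icc (0:ℝ) 4, 4 - (1 - c) * u ≠ 0 := fun u hu => by
    nlinarith [hu.1, hu.2, mul_nonneg hc.le hu.1]
  unfold marchenkoPasturPrimitive
  fun_prop (disch := first | exact pi_ne_zero | exact hD)

lemma marchenkoPasturPrimitive_zero (c : ℝ) : marchenkoPasturPrimitive c 0 = 0 := by
  simp [marchenkoPasturPrimitive]

lemma marchenkoPasturPrimitive_four (c : ℝ) : marchenkoPasturPrimitive c 4 = (1 - c) / 2 := by
  have h : √4 = 2 := by rw [show (4:ℝ) = 2 ^ 2 by norm_num, sqrt_sq zero_le_two]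
  simp [marchenkoPasturPrimitive, h]
  field_simp

lemma sqrt_one_sub_four_div_pos {z : ℝ} (hz : 4 < z) : 0 < √(1 - 4 / z) :=
  sqrt_pos.2 (by rw [sub_pos, div_lt_one]; all_goals linarith)

lemma sqrt_one_sub_four_div_sq_mul {z : ℝ} (hz : 4 < z) : √(1 - 4 / z) ^ 2 * z = z - 4 := by
  rw [sq_sqrt (by rw [sub_nonneg, div_le_one]; all_goals linarith)]
  field_simp

theorem integral_marchenkoPasturDensity_div_sub {z : ℝ} (hz : 4 < z) :
    ∫ y in (0:ℝ)..4, marchenkoPasturDensity y / (z - y) = (1 - √(1 - 4 / z)) / 2 := by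
  have hc := sqrt_one_sub_four_div_pos hz
  set c := √(1 - 4 / z)
  have hcz : c ^ 2 * z = z - 4 := sqrt_one_sub_four_div_sq_mul hz
  have hcont := continuousOn_marchenkoPasturPrimitive hc
  have hderiv : ∀ y ∈ Set.Ioo (0:ℝ) 4, HasDerivAt (marchenkoPasturPrimitive c)
      (marchenkoPasturDensity y / (z - y)) y :=
    fun y hy => hasDerivAt_marchenkoPasturPrimitive hc.le hcz hy.1 hy.2
  have hnonneg : ∀ y ∈ Set.Ioo (0:ℝ) 4, 0 ≤ marchenkoPasturDensity y / (z - y) := fun y hy =>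
    div_nonneg (by unfold marchenkoPasturDensity; positivity) (by linarith [hy.2])
  have hint : IntervalIntegrable (fun y => marchenkoPasturDensity y / (z - y))
      MeasureTheory.volume 0 4 :=
    (intervalIntegrable_iff_integrableOn_Ioc_of_le (by norm_num)).2
      (intervalIntegral.integrableOn_deriv_of_nonneg hcont hderiv hnonneg)
  rw [intervalIntegral.integral_eq_sub_of_hasDerivAt_of_le (by norm_num) hcont hderiv hint,
    marchenkoPasturPrimitive_zero, marchenkoPasturPrimitive_four, sub_zero]

theorem stmt_7 (b : ℝ) (hb : 0 < b) :
    (2 < b →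
      (4 < b ^ 2 / (b - 1) ∧
        1 = b * ∫ y in (0:ℝ)..4,
            (1 / (π * Real.sqrt y)) * Real.sqrt (1 - y / 4) / (b ^ 2 / (b - 1) - y) ∧
        ∀ z : ℝ, 4 < z →
          1 = b * (∫ y in (0:ℝ)..4,
              (1 / (π * Real.sqrt y)) * Real.sqrt (1 - y / 4) / (z - y)) →
          z = b ^ 2 / (b - 1))) ∧
    (b ≤ 2 → ∀ z : ℝ, 4 < z →
      1 ≠ b * ∫ y in (0:ℝ)..4,
          (1 / (π * Real.sqrt y)) * Real.sqrt (1 - y / 4) / (z - y)) := by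
  have hI : ∀ z : ℝ, 4 < z → ∫ y in (0:ℝ)..4,
      (1 / (π * Real.sqrt y)) * Real.sqrt (1 - y / 4) / (z - y) = (1 - √(1 - 4 / z)) / 2 :=
    fun z hz => integral_marchenkoPasturDensity_div_sub hz
  refine ⟨fun hb2 => ?_, fun hb2 z hz h => ?_⟩
  · have hb1 : 0 < b - 1 := by linarith
    have hz₀ : 4 < b ^ 2 / (b - 1) := by rw [lt_div_iff₀ hb1]; nlinarith
    refine ⟨hz₀, ?_, fun z hz h => ?_⟩
    · have hc₀ : √(1 - 4 / (b ^ 2 / (b - 1))) = (b - 2) / b := by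
        rw [show 1 - 4 / (b ^ 2 / (b - 1)) = ((b - 2) / b) ^ 2 by field_simp; ring,
          sqrt_sq (div_nonneg (by linarith) hb.le)]
      rw [hI _ hz₀, hc₀]
      field_simp
      ring
    · rw [hI z hz] at h
      rw [eq_div_iff hb1.ne']
      -- eliminate `c = √(1 - 4/z)` between `b (1 - c) = 2` and `c² z = z - 4`
      linear_combination (z * (b + b * √(1 - 4 / z)) / 2 - z) * h
        - b ^ 2 / 4 * sqrt_one_sub_four_div_sq_mul hz
  · rw [hI z hz] at h
    nlinarith [mul_pos hb (sqrt_one_sub_four_div_pos hz)]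
end

section
/- Let γ ≥ 1 be a real number, set c = (1 − √γ)² and d = (1 + √γ)², and let k ≥ 1 be an integer. Then ∫_{c}^{d} x^k · ((x − c)(d − x))^{1/2} / (2πx) dx = Σ_{i=1}^{k} (1/k)·binomial(k, i)·binomial(k, i−1)·γ^i. (The coefficient (1/k)·binomial(k, i)·binomial(k, i−1) of γ^i is the Narayana number N(k, i−1).) -/
/-!
The `k`-th moment of the density is `1 / (2π)` times the `(k - 1)`-th moment of the semicircle
weight `√((x - c)(d - x))` on `[c, d]`. Integrating the derivative of `p(x) ((x - c)(d - x))^{3/2}`, which vanishes at both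
ends, with `p = x^{n+1}` gives a three-term recurrence for these moments. As `c + d = 2(1 + γ)` and
`cd = (1 - γ)²`, it is the recurrence
`(k + 2) N_{k+1} = (2k + 1)(1 + γ) N_k - (k - 1)(1 - γ)² N_{k-1}` of the Narayana polynomials,
which is checked coefficientwise. The first two moments come from the area of a half disc and
from `p = 1`.
-/

open Real Polynomial

theorem Nat.cast_choose_succ_right_eq {R : Type*} [CommRing R] (n k : ℕ) :
    (n.choose (k + 1) : R) * (k + 1) = n.choose k * (n - k) := by
  rcases le_or_gt k n with h | h
  · exact_mod_cast congrArg (Nat.cast (R := R)) (Nat.choose_succ_right_eq n k)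
  · simp [Nat.choose_eq_zero_of_lt h, Nat.choose_eq_zero_of_lt (Nat.lt_succ_of_lt h)]

-- `N(k, 0) = 0`, whereas the formula `C(k, i) C(k, i - 1) / k` would give `1 / k` there.
noncomputable def narayana (k : ℕ) : ℕ → ℝ
  | 0 => 0
  | i + 1 => k.choose (i + 1) * k.choose i / k

theorem narayana_eq_zero_of_lt {k i : ℕ} (h : k < i) : narayana k i = 0 := by
  cases i with
  | zero => rfl
  | succ i => simp [narayana, Nat.choose_eq_zero_of_lt h]

theorem narayana_recurrence (n i : ℕ) :
    ((n : ℝ) + 3) * narayana (n + 2) i =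
      (2 * n + 3) * (narayana (n + 1) i + narayana (n + 1) (i - 1))
        - n * (narayana n i - 2 * narayana n (i - 1) + narayana n (i - 2)) := by
  rcases Nat.eq_zero_or_pos n with rfl | hn
  · rcases i with _ | _ | _ | j <;> norm_num [narayana, Nat.choose_eq_zero_of_lt]
  match i with
  | 0 => simp [narayana]
  | 1 =>
    simp only [narayana, zero_add, Nat.sub_self, Nat.choose_one_right, Nat.choose_zero_right]
    push_cast
    field_simp
    ring
  | 2 =>
    simp only [narayana, Nat.add_one_sub_one, Nat.sub_self, zero_add, Nat.choose_one_right,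
      Nat.choose_zero_right]
    push_cast [Nat.cast_choose_two]
    field_simp
    ring
  | j + 3 =>
    -- Pascal's rule and `(j + 1) C(n, j + 1) = (n - j) C(n, j)` turn every term into a rational
    -- multiple of `C(n, j) ^ 2`.
    simp only [narayana, show j + 3 - 1 = j + 2 by omega, show j + 3 - 2 = j + 1 by omega]
    have pascal (m l : ℕ) : ((m + 1).choose (l + 1) : ℝ) = m.choose l + m.choose (l + 1) := by
      exact_mod_cast Nat.choose_succ_succ' m l
    simp only [pascal, show j + 2 = (j + 1) + 1 by rfl, show j + 3 = (j + 2) + 1 by rfl]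
    have r0 := Nat.cast_choose_succ_right_eq (R := ℝ) n j
    have r1 := Nat.cast_choose_succ_right_eq (R := ℝ) n (j + 1)
    have r2 := Nat.cast_choose_succ_right_eq (R := ℝ) n (j + 2)
    push_cast at r0 r1 r2
    rw [eq_div_of_mul_eq (by positivity) r2, eq_div_of_mul_eq (by positivity) r1,
      eq_div_of_mul_eq (by positivity) r0]
    push_cast
    field_simp
    ring

noncomputable def narayanaPoly (k : ℕ) : ℝ[X] :=
  ∑ i ∈ Finset.Icc 1 k, C (narayana k i) * X ^ i

theorem coeff_narayanaPoly (k i : ℕ) : (narayanaPoly k).coeff i = narayana k i := by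
  simp only [narayanaPoly, finsetSum_coeff, coeff_C_mul_X_pow, Finset.sum_ite_eq,
    Finset.mem_Icc]
  split_ifs with h
  · rfl
  · rcases Nat.eq_zero_or_pos i with rfl | hi
    · rfl
    · exact (narayana_eq_zero_of_lt (by omega)).symm

theorem coeff_X_pow_mul_narayanaPoly (k m i : ℕ) :
    (X ^ m * narayanaPoly k).coeff i = narayana k (i - m) := by
  rw [coeff_X_pow_mul', coeff_narayanaPoly]
  split_ifs with h
  · rfl
  · rw [Nat.sub_eq_zero_of_le (by omega)]
    rfl

theorem narayanaPoly_recurrence (n : ℕ) :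
    C ((n : ℝ) + 3) * narayanaPoly (n + 2) =
      C (2 * (n : ℝ) + 3) * ((1 + X) * narayanaPoly (n + 1))
        - C (n : ℝ) * ((1 - X) ^ 2 * narayanaPoly n) := by
  ext i
  have h1 (p : ℝ[X]) : (1 + X) * p = X ^ 0 * p + X ^ 1 * p := by ring
  have h2 (p : ℝ[X]) : (1 - X) ^ 2 * p = X ^ 0 * p - 2 * X ^ 1 * p + X ^ 2 * p := by ring
  simp only [h1, h2, coeff_C_mul, coeff_sub, coeff_add, mul_assoc, coeff_ofNat_mul,
    coeff_X_pow_mul_narayanaPoly, coeff_narayanaPoly, Nat.sub_zero]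
  exact narayana_recurrence n i

theorem eval_narayanaPoly (k : ℕ) (γ : ℝ) :
    (narayanaPoly k).eval γ = ∑ i ∈ Finset.Icc 1 k, narayana k i * γ ^ i := by
  simp [narayanaPoly, eval_finsetSum]

section Semicircle

variable {c d : ℝ}

theorem integral_deriv_mul_sqrt_cube_eq_zero {p p' : ℝ → ℝ} (hcd : c ≤ d)
    (hp : ∀ x, HasDerivAt p (p' x) x) (hp' : Continuous p') :
    ∫ x in c..d, (p' x * ((x - c) * (d - x)) + 3 / 2 * p x * (c + d - 2 * x))
      * √((x - c) * (d - x)) = 0 := by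
  have hpc : Continuous p := continuous_iff_continuousAt.2 fun x => (hp x).continuousAt
  have hderiv : ∀ x ∈ Set.Ioo c d, HasDerivAt (fun x => p x * √((x - c) * (d - x)) ^ 3)
      ((p' x * ((x - c) * (d - x)) + 3 / 2 * p x * (c + d - 2 * x))
        * √((x - c) * (d - x))) x := by
    intro x hx
    have hpos : 0 < (x - c) * (d - x) := mul_pos (by linarith [hx.1]) (by linarith [hx.2])
    have hg : HasDerivAt (fun x => (x - c) * (d - x)) (c + d - 2 * x) x :=
      (((hasDerivAt_id' x).sub_const c).mul ((hasDerivAt_id' x).const_sub d)).congr_deriv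
        (by ring)
    refine ((hp x).mul ((hg.sqrt hpos.ne').pow 3)).congr_deriv ?_
    set S := √((x - c) * (d - x))
    have hS : S ^ 2 = (x - c) * (d - x) := sq_sqrt hpos.le
    have hS0 : S ≠ 0 := (sqrt_pos.2 hpos).ne'
    calc p' x * S ^ 3 + p x * (↑3 * S ^ (3 - 1) * ((c + d - 2 * x) / (2 * S)))
        = (p' x * S ^ 2 + 3 / 2 * p x * (c + d - 2 * x)) * S := by
          field_simp
          ring
      _ = _ := by rw [hS]
  have key := intervalIntegral.integral_eq_sub_of_hasDerivAt_of_le hcd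
    (by fun_prop : Continuous fun x => p x * √((x - c) * (d - x)) ^ 3).continuousOn hderiv
    ((by fun_prop : Continuous _).intervalIntegrable c d)
  simpa using key

noncomputable def semicircleMoment (c d : ℝ) (n : ℕ) : ℝ :=
  ∫ x in c..d, x ^ n * √((x - c) * (d - x))

theorem intervalIntegrable_pow_mul_sqrt (n : ℕ) :
    IntervalIntegrable (fun x => x ^ n * √((x - c) * (d - x))) MeasureTheory.volume c d :=
  (by fun_prop : Continuous _).intervalIntegrable c d

theorem semicircleMoment_zero (hcd : c ≤ d) : semicircleMoment c d 0 = π * (d - c) ^ 2 / 8 := by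
  rcases hcd.eq_or_lt with rfl | hlt
  · simp [semicircleMoment]
  obtain ⟨r, hr, rfl⟩ : ∃ r, 0 < r ∧ d = c + 2 * r :=
    ⟨(d - c) / 2, by linarith, by ring⟩
  have hsub := intervalIntegral.integral_comp_mul_add (a := -1) (b := 1)
    (fun x => √((x - c) * (c + 2 * r - x))) hr.ne' (c + r)
  have hval (t : ℝ) : √((r * t + (c + r) - c) * (c + 2 * r - (r * t + (c + r))))
      = r * √(1 - t ^ 2) := by
    rw [show (r * t + (c + r) - c) * (c + 2 * r - (r * t + (c + r))) = r ^ 2 * (1 - t ^ 2) by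
      ring, sqrt_mul (sq_nonneg r), sqrt_sq hr.le]
  rw [show r * -1 + (c + r) = c by ring, show r * 1 + (c + r) = c + 2 * r by ring] at hsub
  simp only [hval, intervalIntegral.integral_const_mul, integral_sqrt_one_sub_sq,
    smul_eq_mul] at hsub
  rw [eq_inv_mul_iff_mul_eq₀ hr.ne'] at hsub
  simp only [semicircleMoment, pow_zero, one_mul, ← hsub]
  ring

theorem semicircleMoment_one (hcd : c ≤ d) :
    semicircleMoment c d 1 = (c + d) / 2 * semicircleMoment c d 0 := by
  have h := integral_deriv_mul_sqrt_cube_eq_zero hcd (fun x => hasDerivAt_const x (1 : ℝ))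
    continuous_const
  rw [intervalIntegral.integral_congr (g := fun x =>
      3 / 2 * (c + d) * (x ^ 0 * √((x - c) * (d - x))) - 3 * (x ^ 1 * √((x - c) * (d - x))))
      (fun x _ => by ring),
    intervalIntegral.integral_sub ((intervalIntegrable_pow_mul_sqrt 0).const_mul _)
      ((intervalIntegrable_pow_mul_sqrt 1).const_mul _),
    intervalIntegral.integral_const_mul, intervalIntegral.integral_const_mul] at h
  simp only [semicircleMoment]
  linear_combination -h / 3

theorem semicircleMoment_add_two (hcd : c ≤ d) (n : ℕ) :
    ((n : ℝ) + 4) * semicircleMoment c d (n + 2)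
      = ((n : ℝ) + 5 / 2) * (c + d) * semicircleMoment c d (n + 1)
        - ((n : ℝ) + 1) * (c * d) * semicircleMoment c d n := by
  have hpow (x : ℝ) : HasDerivAt (fun x => x ^ (n + 1)) (((n : ℝ) + 1) * x ^ n) x := by
    simpa using hasDerivAt_pow (n + 1) x
  have h := integral_deriv_mul_sqrt_cube_eq_zero hcd hpow (by fun_prop)
  rw [intervalIntegral.integral_congr (g := fun x =>
      ((n : ℝ) + 5 / 2) * (c + d) * (x ^ (n + 1) * √((x - c) * (d - x)))
        - ((n : ℝ) + 1) * (c * d) * (x ^ n * √((x - c) * (d - x)))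
        - ((n : ℝ) + 4) * (x ^ (n + 2) * √((x - c) * (d - x)))) (fun x _ => by ring),
    intervalIntegral.integral_sub (((intervalIntegrable_pow_mul_sqrt _).const_mul _).sub
      ((intervalIntegrable_pow_mul_sqrt _).const_mul _))
      ((intervalIntegrable_pow_mul_sqrt _).const_mul _),
    intervalIntegral.integral_sub ((intervalIntegrable_pow_mul_sqrt _).const_mul _)
      ((intervalIntegrable_pow_mul_sqrt _).const_mul _),
    intervalIntegral.integral_const_mul, intervalIntegral.integral_const_mul,
    intervalIntegral.integral_const_mul] at h
  simp only [semicircleMoment]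
  linear_combination -h

theorem semicircleMoment_eq_eval_narayanaPoly {γ : ℝ} (hcd : c ≤ d)
    (hsum : c + d = 2 * (1 + γ)) (hprod : c * d = (1 - γ) ^ 2) (n : ℕ) :
    semicircleMoment c d n = 2 * π * (narayanaPoly (n + 1)).eval γ := by
  have hM0 : semicircleMoment c d 0 = 2 * π * γ := by
    rw [semicircleMoment_zero hcd]
    linear_combination π / 8 * (hsum * (c + d + 2 * (1 + γ)) - 4 * hprod)
  induction n using Nat.twoStepInduction with
  | zero =>
    rw [hM0]
    simp [eval_narayanaPoly, narayana]
  | one =>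
    have hN2 : (narayanaPoly 2).eval γ = γ + γ ^ 2 := by
      norm_num [eval_narayanaPoly, narayana, Finset.sum_Icc_succ_top]
    rw [semicircleMoment_one hcd, hM0, hsum, hN2]
    ring
  | more n ih₀ ih₁ =>
    have hrec := congrArg (eval γ) (narayanaPoly_recurrence (n + 1))
    rw [show n + 1 + 2 = n + 2 + 1 from rfl] at hrec
    simp only [eval_mul, eval_sub, eval_add, eval_C, eval_X, eval_one, eval_pow] at hrec
    have hM := semicircleMoment_add_two hcd n
    rw [ih₀, ih₁, hsum, hprod] at hM
    push_cast at hrec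
    refine mul_left_cancel₀ (by positivity : (n : ℝ) + 4 ≠ 0) ?_
    linear_combination hM - 2 * π * hrec

end Semicircle

theorem integral_pow_succ_mul_div_mul_self (f : ℝ → ℝ) (a c d : ℝ) (n : ℕ) :
    ∫ x in c..d, x ^ (n + 1) * f x / (a * x) = a⁻¹ * ∫ x in c..d, x ^ n * f x := by
  rw [← intervalIntegral.integral_const_mul]
  refine intervalIntegral.integral_congr_ae ?_
  filter_upwards [MeasureTheory.compl_mem_ae_iff.2 (MeasureTheory.measure_singleton 0)]
    with x (hx : x ≠ 0) _
  field_simp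
  ring

theorem stmt_8 (γ : ℝ) (hγ : 1 ≤ γ) (k : ℕ) (hk : 1 ≤ k)
    (c d : ℝ) (hc : c = (1 - Real.sqrt γ) ^ 2) (hd : d = (1 + Real.sqrt γ) ^ 2) :
    ∫ x in c..d, x ^ k * Real.sqrt ((x - c) * (d - x)) / (2 * π * x)
      = ∑ i ∈ Finset.Icc 1 k,
          (1 / (k : ℝ)) * (Nat.choose k i : ℝ) * (Nat.choose k (i - 1) : ℝ) * γ ^ i := by
  obtain ⟨n, rfl⟩ : ∃ n, k = n + 1 := ⟨k - 1, by omega⟩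
  have hsq : √γ ^ 2 = γ := sq_sqrt (by linarith)
  have hcd : c ≤ d := by rw [hc, hd]; nlinarith [sqrt_nonneg γ]
  have hsum : c + d = 2 * (1 + γ) := by rw [hc, hd]; linear_combination 2 * hsq
  have hprod : c * d = (1 - γ) ^ 2 := by
    rw [hc, hd]; linear_combination (√γ ^ 2 + γ - 2) * hsq
  calc _ = (2 * π)⁻¹ * semicircleMoment c d n := integral_pow_succ_mul_div_mul_self _ _ _ _ _
    _ = ∑ i ∈ Finset.Icc 1 (n + 1), narayana (n + 1) i * γ ^ i := by
      rw [semicircleMoment_eq_eval_narayanaPoly hcd hsum hprod, eval_narayanaPoly]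
      field_simp
    _ = _ := Finset.sum_congr rfl fun i hi => by
      obtain ⟨j, rfl⟩ : ∃ j, i = j + 1 := ⟨i - 1, by simp at hi; omega⟩
      simp only [narayana, Nat.add_sub_cancel]
      ring
end

section
/- Let γ ≥ 1 be a real number, set c = (1 − √γ)² and d = (1 + √γ)², and let z > d. Then ∫_{c}^{d} ((x − c)(d − x))^{1/2} / (2πx·(z − x)) dx = (1/2) · (1 − (γ − 1)/z − (1 − 2(γ + 1)/z + (γ − 1)²/z²)^{1/2}). -/
open Real Set

/-!
On `(c, d)` with `0 ≤ c < d < z`, the integrand `z √((x - c)(d - x)) / (x (z - x))` has the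
elementary primitive
`z arcsin ((2x - c - d)/(d - c)) - √(cd) arcsin (((c + d)x - 2cd)/((d - c)x))
  + √((z - c)(z - d)) arcsin (((d - c)² - (2z - c - d)(2x - c - d))/(2(d - c)(z - x)))`,
whose three arcsines run between `∓π/2` and `±π/2` as `x` goes from `c` to `d`. The integral is
therefore `π (z - √(cd) - √((z - c)(z - d))) / z`; for the Marčenko–Pastur edges
`cd = (γ - 1)²` and `(z - c)(z - d) = z² - 2(γ + 1)z + (γ - 1)²`.
-/

theorem hasDerivAt_arcsin_comp_of_one_sub_sq_eq {g : ℝ → ℝ} {g' x u : ℝ}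
    (hg : HasDerivAt g g' x) (hu : 0 < u) (h : 1 - g x ^ 2 = u ^ 2) :
    HasDerivAt (fun y => arcsin (g y)) (g' / u) x := by
  have hlt : g x ^ 2 < 1 := by nlinarith
  have hne_neg_one : g x ≠ -1 := by rintro heq; norm_num [heq] at hlt
  have hne_one : g x ≠ 1 := by rintro heq; norm_num [heq] at hlt
  refine ((hasDerivAt_arcsin hne_neg_one hne_one).comp x hg).congr_deriv ?_
  rw [h, sqrt_sq hu.le]
  ring

section Primitive

variable {c d z x : ℝ}

theorem hasDerivAt_arcsin_affine (hx : x ∈ Ioo c d) :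
    HasDerivAt (fun y => arcsin ((2 * y - c - d) / (d - c)))
      (1 / √((x - c) * (d - x))) x := by
  obtain ⟨hcx, hxd⟩ := hx
  have hQ : 0 < (x - c) * (d - x) := mul_pos (by linarith) (by linarith)
  have hdc : d - c ≠ 0 := by linarith
  have hg : HasDerivAt (fun y => (2 * y - c - d) / (d - c)) (2 / (d - c)) x := by
    simpa using ((((hasDerivAt_id x).const_mul 2).sub_const c).sub_const d).div_const (d - c)
  have key : 1 - ((2 * x - c - d) / (d - c)) ^ 2 = (2 * √((x - c) * (d - x)) / (d - c)) ^ 2 := by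
    conv_rhs => rw [div_pow, mul_pow, sq_sqrt hQ.le]
    field_simp
    ring
  convert hasDerivAt_arcsin_comp_of_one_sub_sq_eq hg (div_pos (by positivity) (by linarith)) key
    using 1
  field_simp

theorem hasDerivAt_sqrt_mul_arcsin_moebius (hc : 0 ≤ c) (hx : x ∈ Ioo c d) :
    HasDerivAt (fun y => √(c * d) * arcsin (((c + d) * y - 2 * (c * d)) / ((d - c) * y)))
      (c * d / (x * √((x - c) * (d - x)))) x := by
  obtain ⟨hcx, hxd⟩ := hx
  rcases hc.eq_or_lt with rfl | hc
  · simpa using hasDerivAt_const x (0 : ℝ)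
  have hx0 : 0 < x := hc.trans hcx
  have hdc : 0 < d - c := by linarith
  have hcd : 0 < c * d := mul_pos hc (by linarith)
  have hQ : 0 < (x - c) * (d - x) := mul_pos (by linarith) (by linarith)
  have hnum : HasDerivAt (fun y => (c + d) * y - 2 * (c * d)) (c + d) x := by
    simpa using ((hasDerivAt_id x).const_mul (c + d)).sub_const (2 * (c * d))
  have hden : HasDerivAt (fun y => (d - c) * y) (d - c) x := by
    simpa using (hasDerivAt_id x).const_mul (d - c)
  have key : 1 - (((c + d) * x - 2 * (c * d)) / ((d - c) * x)) ^ 2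
      = (2 * √(c * d) * √((x - c) * (d - x)) / ((d - c) * x)) ^ 2 := by
    conv_rhs => rw [div_pow, mul_pow, mul_pow, sq_sqrt hcd.le, sq_sqrt hQ.le]
    field_simp
    ring
  refine ((hasDerivAt_arcsin_comp_of_one_sub_sq_eq (hnum.div hden (by positivity))
    (by positivity) key).const_mul _).congr_deriv ?_
  field_simp
  ring

theorem hasDerivAt_sqrt_mul_arcsin_pole (hz : d < z) (hx : x ∈ Ioo c d) :
    HasDerivAt (fun y => √((z - c) * (z - d)) *
        arcsin (((d - c) ^ 2 - (2 * z - c - d) * (2 * y - c - d)) / (2 * (d - c) * (z - y))))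
      (-((z - c) * (z - d) / ((z - x) * √((x - c) * (d - x))))) x := by
  obtain ⟨hcx, hxd⟩ := hx
  have hdc : 0 < d - c := by linarith
  have hzx : 0 < z - x := by linarith
  have hR : 0 < (z - c) * (z - d) := mul_pos (by linarith) (by linarith)
  have hQ : 0 < (x - c) * (d - x) := mul_pos (by linarith) (by linarith)
  have hnum : HasDerivAt (fun y => (d - c) ^ 2 - (2 * z - c - d) * (2 * y - c - d))
      (-(2 * (2 * z - c - d))) x := by
    simpa [mul_comm] using
      (((((hasDerivAt_id x).const_mul 2).sub_const c).sub_const d).const_mul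
        (2 * z - c - d)).const_sub ((d - c) ^ 2)
  have hden : HasDerivAt (fun y => 2 * (d - c) * (z - y)) (-(2 * (d - c))) x := by
    simpa using ((hasDerivAt_id x).const_sub z).const_mul (2 * (d - c))
  have key : 1 - (((d - c) ^ 2 - (2 * z - c - d) * (2 * x - c - d)) / (2 * (d - c) * (z - x))) ^ 2
      = (2 * √((z - c) * (z - d)) * √((x - c) * (d - x)) / ((d - c) * (z - x))) ^ 2 := by
    conv_rhs => rw [div_pow, mul_pow, mul_pow, sq_sqrt hR.le, sq_sqrt hQ.le]
    field_simp
    ring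
  refine ((hasDerivAt_arcsin_comp_of_one_sub_sq_eq (hnum.div hden (by positivity))
    (by positivity) key).const_mul _).congr_deriv ?_
  field_simp
  ring

noncomputable def stieltjesPrimitive (c d z x : ℝ) : ℝ :=
  z * arcsin ((2 * x - c - d) / (d - c))
    - √(c * d) * arcsin (((c + d) * x - 2 * (c * d)) / ((d - c) * x))
    + √((z - c) * (z - d)) *
      arcsin (((d - c) ^ 2 - (2 * z - c - d) * (2 * x - c - d)) / (2 * (d - c) * (z - x)))

theorem hasDerivAt_stieltjesPrimitive (hc : 0 ≤ c) (hz : d < z) (hx : x ∈ Ioo c d) :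
    HasDerivAt (stieltjesPrimitive c d z) (z * √((x - c) * (d - x)) / (x * (z - x))) x := by
  have hx0 : 0 < x := hc.trans_lt hx.1
  have hzx : 0 < z - x := by linarith [hx.2]
  have hQ : 0 < (x - c) * (d - x) := mul_pos (by linarith [hx.1]) (by linarith [hx.2])
  have hw : √((x - c) * (d - x)) ^ 2 = (x - c) * (d - x) := sq_sqrt hQ.le
  have hw0 : 0 < √((x - c) * (d - x)) := sqrt_pos.2 hQ
  refine ((((hasDerivAt_arcsin_affine hx).const_mul z).sub
    (hasDerivAt_sqrt_mul_arcsin_moebius hc hx)).add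
      (hasDerivAt_sqrt_mul_arcsin_pole hz hx)).congr_deriv ?_
  field_simp
  linear_combination (-z) * hw

theorem continuousOn_stieltjesPrimitive (hc : 0 ≤ c) (hcd : c < d) (hz : d < z) :
    ContinuousOn (stieltjesPrimitive c d z) (Icc c d) := by
  have hdc : d - c ≠ 0 := by linarith
  have hmoebius : ContinuousOn
      (fun x => √(c * d) * arcsin (((c + d) * x - 2 * (c * d)) / ((d - c) * x))) (Icc c d) := by
    rcases hc.eq_or_lt with rfl | hc
    · simpa using continuousOn_const
    refine continuousOn_const.mul (continuous_arcsin.comp_continuousOn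
      (ContinuousOn.div (by fun_prop) (by fun_prop) fun x hx => ?_))
    have : x ≠ 0 := (hc.trans_le hx.1).ne'
    positivity
  have hpole : ContinuousOn (fun x => √((z - c) * (z - d)) *
      arcsin (((d - c) ^ 2 - (2 * z - c - d) * (2 * x - c - d)) / (2 * (d - c) * (z - x))))
      (Icc c d) := by
    refine continuousOn_const.mul (continuous_arcsin.comp_continuousOn
      (ContinuousOn.div (by fun_prop) (by fun_prop) fun x hx => ?_))
    have : z - x ≠ 0 := by linarith [hx.2]
    positivity
  exact ((continuous_const.mul (continuous_arcsin.comp (by fun_prop))).continuousOn.sub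
    hmoebius).add hpole

theorem stieltjesPrimitive_right (hc : 0 ≤ c) (hcd : c < d) (hz : d < z) :
    stieltjesPrimitive c d z d = (z - √(c * d) - √((z - c) * (z - d))) * (π / 2) := by
  have h₁ : (2 * d - c - d) / (d - c) = 1 := by
    rw [div_eq_one_iff_eq (by linarith)]; ring
  have h₂ : ((c + d) * d - 2 * (c * d)) / ((d - c) * d) = 1 := by
    rw [div_eq_one_iff_eq (mul_pos (by linarith) (by linarith)).ne']; ring
  have h₃ : ((d - c) ^ 2 - (2 * z - c - d) * (2 * d - c - d)) / (2 * (d - c) * (z - d)) = -1 := by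
    rw [div_eq_iff (mul_pos (by linarith) (by linarith)).ne']; ring
  rw [stieltjesPrimitive, h₁, h₂, h₃, arcsin_one, arcsin_neg_one]
  ring

theorem stieltjesPrimitive_left (hc : 0 ≤ c) (hcd : c < d) (hz : d < z) :
    stieltjesPrimitive c d z c = -((z - √(c * d) - √((z - c) * (z - d))) * (π / 2)) := by
  have h₁ : (2 * c - c - d) / (d - c) = -1 := by
    rw [div_eq_iff (by linarith)]; ring
  have h₃ : ((d - c) ^ 2 - (2 * z - c - d) * (2 * c - c - d)) / (2 * (d - c) * (z - c)) = 1 := by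
    rw [div_eq_one_iff_eq (mul_pos (by linarith) (by linarith)).ne']; ring
  rw [stieltjesPrimitive, h₁, h₃, arcsin_one, arcsin_neg_one]
  rcases hc.eq_or_lt with rfl | hc
  · simp only [zero_mul, sqrt_zero]
    ring
  have h₂ : ((c + d) * c - 2 * (c * d)) / ((d - c) * c) = -1 := by
    rw [div_eq_iff (mul_pos (by linarith) hc).ne']; ring
  rw [h₂, arcsin_neg_one]
  ring

end Primitive

theorem integral_sqrt_div_mul_sub {c d z : ℝ} (hc : 0 ≤ c) (hcd : c < d) (hz : d < z) :
    ∫ x in c..d, √((x - c) * (d - x)) / (x * (z - x))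
      = π * (z - √(c * d) - √((z - c) * (z - d))) / z := by
  have hz0 : 0 < z := by linarith
  have hderiv := fun x (hx : x ∈ Ioo c d) => hasDerivAt_stieltjesPrimitive hc hz hx
  have hcont := continuousOn_stieltjesPrimitive hc hcd hz
  have hnonneg : ∀ x ∈ Ioo c d, 0 ≤ z * √((x - c) * (d - x)) / (x * (z - x)) := fun x hx =>
    div_nonneg (mul_nonneg hz0.le (sqrt_nonneg _))
      (mul_nonneg (by linarith [hx.1]) (by linarith [hx.2]))
  have hint :=
    (intervalIntegrable_iff_integrableOn_Ioc_of_le hcd.le).2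
      (intervalIntegral.integrableOn_deriv_of_nonneg hcont hderiv hnonneg)
  have hftc := intervalIntegral.integral_eq_sub_of_hasDerivAt_of_le hcd.le hcont hderiv hint
  rw [stieltjesPrimitive_right hc hcd hz, stieltjesPrimitive_left hc hcd hz] at hftc
  simp_rw [mul_div_assoc, intervalIntegral.integral_const_mul] at hftc
  field_simp
  linear_combination hftc

theorem stmt_9 (γ : ℝ) (hγ : 1 ≤ γ)
    (c d : ℝ) (hc : c = (1 - Real.sqrt γ) ^ 2) (hd : d = (1 + Real.sqrt γ) ^ 2)
    (z : ℝ) (hz : d < z) :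
    ∫ x in c..d, Real.sqrt ((x - c) * (d - x)) / (2 * π * x * (z - x))
      = (1 / 2) * (1 - (γ - 1) / z
          - Real.sqrt (1 - 2 * (γ + 1) / z + (γ - 1) ^ 2 / z ^ 2)) := by
  have hs : √γ ^ 2 = γ := sq_sqrt (by linarith)
  have hs1 : 1 ≤ √γ := one_le_sqrt.2 hγ
  have hc0 : 0 ≤ c := hc ▸ sq_nonneg _
  have hcd : c < d := by rw [hc, hd]; nlinarith
  have hz0 : 0 < z := by linarith
  have hedges : √(c * d) = γ - 1 := by
    rw [hc, hd, ← mul_pow, show (1 - √γ) * (1 + √γ) = 1 - √γ ^ 2 by ring, hs,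
      sqrt_sq_eq_abs, abs_sub_comm, abs_of_nonneg (by linarith)]
  have hdisc : 1 - 2 * (γ + 1) / z + (γ - 1) ^ 2 / z ^ 2 = (z - c) * (z - d) / z ^ 2 := by
    rw [hc, hd]
    field_simp
    linear_combination (2 * z + 2 - γ - √γ ^ 2) * hs
  calc ∫ x in c..d, √((x - c) * (d - x)) / (2 * π * x * (z - x))
      = (∫ x in c..d, √((x - c) * (d - x)) / (x * (z - x))) / (2 * π) := by
        rw [← intervalIntegral.integral_div]
        congr 1 with x
        rw [div_div]
        ring_nf
    _ = _ := by
        rw [integral_sqrt_div_mul_sub hc0 hcd hz, hedges, hdisc, sqrt_div' _ (sq_nonneg z),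
          sqrt_sq hz0.le]
        field_simp
end

section
/- Let m ≥ 1 be an integer, let 0 < λ_1 < λ_2 < ⋯ < λ_m be real numbers, and let μ > 0. Consider the equation 1 = μ · Σ_{j=1}^{m} x/(x² − λ_j²) for x > 0 with x ∉ {λ_1, …, λ_m}. Then this equation has exactly m solutions x_1 < x_2 < ⋯ < x_m, and they interlace with the λ_j: λ_j < x_j < λ_{j+1} for j = 1, …, m−1, and λ_m < x_m; in particular there is no solution in (0, λ_1). -/
/-!
Write `f t = ∑ k, t / (t ^ 2 - λ_k ^ 2)`, so that the equation reads `f t = 1 / μ`.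
On `(0, λ_1)` every term is negative. On each gap between consecutive poles, `(λ_j, λ_{j+1})`
or `(λ_m, ∞)`, every term is strictly decreasing, so `f` is injective there; `f → +∞` at `λ_j⁺`,
while `f → -∞` at `λ_{j+1}⁻` and `f → 0` at `+∞`. By the intermediate value theorem `f` takes
the value `1 / μ > 0` exactly once in each gap.
-/

open Filter Topology Set Function Polynomial

noncomputable def secularSum {ι : Type*} [Fintype ι] (lam : ι → ℝ) (t : ℝ) : ℝ :=
  ∑ k, t / (t ^ 2 - lam k ^ 2)

lemma div_sq_sub_lt_div_sq_sub {s t c : ℝ} (hs : 0 < s) (hst : s < t) (hc : 0 ≤ c)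
    (hsign : 0 < (s ^ 2 - c) * (t ^ 2 - c)) : t / (t ^ 2 - c) < s / (s ^ 2 - c) := by
  have hs' : s ^ 2 - c ≠ 0 := left_ne_zero_of_mul hsign.ne'
  have ht' : t ^ 2 - c ≠ 0 := right_ne_zero_of_mul hsign.ne'
  have key : s / (s ^ 2 - c) - t / (t ^ 2 - c)
      = (t - s) * (s * t + c) / ((s ^ 2 - c) * (t ^ 2 - c)) := by
    field_simp
    ring
  have hnum : 0 < (t - s) * (s * t + c) :=
    mul_pos (sub_pos.2 hst) (add_pos_of_pos_of_nonneg (mul_pos hs (hs.trans hst)) hc)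
  linarith [div_pos hnum hsign]

lemma tendsto_div_sq_sub_sq_nhdsGT {c : ℝ} (hc : 0 < c) :
    Tendsto (fun t => t / (t ^ 2 - c ^ 2)) (𝓝[>] c) atTop := by
  have hden : Tendsto (fun t => t ^ 2 - c ^ 2) (𝓝[>] c) (𝓝[>] 0) := by
    refine tendsto_nhdsWithin_iff.2 ⟨?_, ?_⟩
    · exact (((continuous_pow 2).sub continuous_const).tendsto' c 0 (sub_self _)).mono_left
        nhdsWithin_le_nhds
    · filter_upwards [self_mem_nhdsWithin] with t (ht : c < t)
      exact sub_pos.2 (pow_lt_pow_left₀ ht hc.le two_ne_zero)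
  exact (tendsto_id.mono_left nhdsWithin_le_nhds).pos_mul_atTop hc hden.inv_tendsto_nhdsGT_zero

lemma tendsto_div_sq_sub_sq_nhdsLT {c : ℝ} (hc : 0 < c) :
    Tendsto (fun t => t / (t ^ 2 - c ^ 2)) (𝓝[<] c) atBot := by
  have hden : Tendsto (fun t => t ^ 2 - c ^ 2) (𝓝[<] c) (𝓝[<] 0) := by
    refine tendsto_nhdsWithin_iff.2 ⟨?_, ?_⟩
    · exact (((continuous_pow 2).sub continuous_const).tendsto' c 0 (sub_self _)).mono_left
        nhdsWithin_le_nhds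
    · filter_upwards [Ioo_mem_nhdsLT hc] with t ht
      exact sub_neg.2 (pow_lt_pow_left₀ ht.2 ht.1.le two_ne_zero)
  exact (tendsto_id.mono_left nhdsWithin_le_nhds).pos_mul_atBot hc hden.inv_tendsto_nhdsLT_zero

lemma tendsto_div_sq_sub_atTop (c : ℝ) : Tendsto (fun t => t / (t ^ 2 - c)) atTop (𝓝 0) := by
  have hdeg : (X : ℝ[X]).degree < (X ^ 2 - C c).degree := by
    rw [degree_X, degree_X_pow_sub_C two_pos]
    decide
  simpa using div_tendsto_atTop_zero_of_degree_lt _ _ hdeg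

lemma continuousAt_sum_div_sq_sub_sq {ι : Type*} (s : Finset ι) (lam : ι → ℝ) {t : ℝ}
    (h : ∀ k ∈ s, t ^ 2 ≠ lam k ^ 2) :
    ContinuousAt (fun y => ∑ k ∈ s, y / (y ^ 2 - lam k ^ 2)) t :=
  tendsto_finsetSum _ fun k hk =>
    continuousAt_id.div (by fun_prop) (sub_ne_zero.2 (h k hk))

section SecularSum

variable {ι : Type*} [Fintype ι] {lam : ι → ℝ}

lemma continuousOn_secularSum (hnonneg : ∀ k, 0 ≤ lam k) {S : Set ℝ} (hS : S ⊆ Ioi 0)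
    (hpoles : ∀ k, lam k ∉ S) : ContinuousOn (secularSum lam) S := fun _ ht =>
  (continuousAt_sum_div_sq_sub_sq _ lam fun k _ =>
    mt (sq_eq_sq₀ (hS ht).le (hnonneg k)).1 fun h => hpoles k (h ▸ ht)).continuousWithinAt

lemma strictAntiOn_secularSum [Nonempty ι] (hnonneg : ∀ k, 0 ≤ lam k) {S : Set ℝ}
    (hS : S ⊆ Ioi 0) (hconn : S.OrdConnected) (hpoles : ∀ k, lam k ∉ S) :
    StrictAntiOn (secularSum lam) S := by
  intro s hs t ht hst
  refine Finset.sum_lt_sum_of_nonempty Finset.univ_nonempty fun k _ => ?_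
  have hs0 : 0 < s := hS hs
  refine div_sq_sub_lt_div_sq_sub hs0 hst (sq_nonneg _) ?_
  have hk := hnonneg k
  have hout : lam k < s ∨ t < lam k := by
    by_contra! h
    exact hpoles k (hconn.out hs ht h)
  rcases hout with hlt | hlt
  · apply mul_pos <;> nlinarith
  · apply mul_pos_of_neg_of_neg <;> nlinarith

lemma secularSum_neg [Nonempty ι] {t : ℝ} (ht : 0 < t) (hlt : ∀ k, t < lam k) :
    secularSum lam t < 0 :=
  Finset.sum_neg (fun k _ => div_neg_of_pos_of_neg ht (by nlinarith [hlt k]))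
    Finset.univ_nonempty

lemma tendsto_secularSum_atTop (lam : ι → ℝ) : Tendsto (secularSum lam) atTop (𝓝 0) := by
  have h := tendsto_finsetSum Finset.univ fun k _ => tendsto_div_sq_sub_atTop (lam k ^ 2)
  rw [Finset.sum_const_zero] at h
  exact h

lemma tendsto_sum_erase_div_sq_sub_sq [DecidableEq ι] (hpos : ∀ k, 0 < lam k)
    (hinj : Injective lam) (j : ι) :
    Tendsto (fun t => ∑ k ∈ Finset.univ.erase j, t / (t ^ 2 - lam k ^ 2)) (𝓝 (lam j))
      (𝓝 (∑ k ∈ Finset.univ.erase j, lam j / (lam j ^ 2 - lam k ^ 2))) :=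
  continuousAt_sum_div_sq_sub_sq _ lam fun k hk =>
    mt (sq_eq_sq₀ (hpos j).le (hpos k).le).1 (hinj.ne (Finset.ne_of_mem_erase hk).symm)

lemma tendsto_secularSum_nhdsGT (hpos : ∀ k, 0 < lam k) (hinj : Injective lam) (j : ι) :
    Tendsto (secularSum lam) (𝓝[>] lam j) atTop := by
  classical
  exact ((tendsto_div_sq_sub_sq_nhdsGT (hpos j)).atTop_add
    ((tendsto_sum_erase_div_sq_sub_sq hpos hinj j).mono_left nhdsWithin_le_nhds)).congr
    fun _ => Finset.add_sum_erase _ _ (Finset.mem_univ j)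

lemma tendsto_secularSum_nhdsLT (hpos : ∀ k, 0 < lam k) (hinj : Injective lam) (j : ι) :
    Tendsto (secularSum lam) (𝓝[<] lam j) atBot := by
  classical
  exact ((tendsto_div_sq_sub_sq_nhdsLT (hpos j)).atBot_add
    ((tendsto_sum_erase_div_sq_sub_sq hpos hinj j).mono_left nhdsWithin_le_nhds)).congr
    fun _ => Finset.add_sum_erase _ _ (Finset.mem_univ j)

end SecularSum

section PoleGap

variable {m : ℕ} {lam : Fin m → ℝ}

/-- The open interval `(lam j, lam (j + 1))`, read as `(lam j, ∞)` for the last index. -/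
def poleGap (lam : Fin m → ℝ) (j : Fin m) : Set ℝ :=
  {y | lam j < y ∧ ∀ k, j < k → y < lam k}

lemma ordConnected_poleGap (j : Fin m) : (poleGap lam j).OrdConnected :=
  ⟨fun _ hx _ hy _ hz => ⟨hx.1.trans_le hz.1, fun k hk => hz.2.trans_lt (hy.2 k hk)⟩⟩

lemma poleGap_subset_Ioi (hpos : ∀ k, 0 < lam k) (j : Fin m) : poleGap lam j ⊆ Ioi 0 :=
  fun _ hy => (hpos j).trans hy.1

lemma notMem_poleGap (hmono : Monotone lam) (j k : Fin m) : lam k ∉ poleGap lam j := by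
  intro hk
  rcases le_or_gt k j with hkj | hjk
  · exact (hmono hkj).not_gt hk.1
  · exact (hk.2 k hjk).false

lemma exists_mem_poleGap {t : ℝ} (hne : ∀ k, t ≠ lam k) (hlt : ∃ k, lam k < t) :
    ∃ j, t ∈ poleGap lam j := by
  classical
  obtain ⟨j, hj, hmax⟩ := Finset.exists_max_image (Finset.univ.filter fun k => lam k < t) id
    (by simpa [Finset.filter_nonempty_iff] using hlt)
  refine ⟨j, (Finset.mem_filter.1 hj).2, fun k hjk => ?_⟩
  by_contra! hkt
  exact hjk.not_ge (hmax k (by simpa using hkt.lt_of_ne (hne k).symm))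

lemma poleGap_mem_nhdsGT (hmono : StrictMono lam) (j : Fin m) :
    poleGap lam j ∈ 𝓝[>] lam j := by
  have habove : ∀ᶠ y in 𝓝 (lam j), ∀ k, j < k → y < lam k :=
    eventually_all.2 fun k => by
      by_cases hjk : j < k
      · exact (eventually_lt_nhds (hmono hjk)).mono fun _ hy _ => hy
      · exact Eventually.of_forall fun _ h => absurd h hjk
  exact inter_mem self_mem_nhdsWithin (mem_nhdsWithin_of_mem_nhds habove)

lemma poleGap_mem_nhdsLT (hmono : StrictMono lam) (j : Fin m) (h : (j : ℕ) + 1 < m) :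
    poleGap lam j ∈ 𝓝[<] lam ⟨j + 1, h⟩ := by
  have hsucc : ∀ k, j < k → lam ⟨j + 1, h⟩ ≤ lam k := fun k hjk =>
    hmono.monotone (Fin.le_def.2 (Fin.lt_def.1 hjk))
  filter_upwards [Ioo_mem_nhdsLT (hmono (Fin.lt_def.2 (Nat.lt_succ_self _)))] with y hy
  exact ⟨hy.1, fun k hjk => hy.2.trans_le (hsucc k hjk)⟩

lemma poleGap_mem_atTop (j : Fin m) (h : ¬(j : ℕ) + 1 < m) : poleGap lam j ∈ atTop := by
  filter_upwards [eventually_gt_atTop (lam j)] with y hy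
  exact ⟨hy, fun k hjk => absurd (Fin.lt_def.1 hjk) (by omega)⟩

lemma strictAntiOn_secularSum_poleGap (hpos : ∀ k, 0 < lam k) (hmono : StrictMono lam)
    (j : Fin m) : StrictAntiOn (secularSum lam) (poleGap lam j) :=
  have : Nonempty (Fin m) := ⟨j⟩
  strictAntiOn_secularSum (fun k => (hpos k).le) (poleGap_subset_Ioi hpos j)
    (ordConnected_poleGap j) (notMem_poleGap hmono.monotone j)

lemma Ioi_subset_image_secularSum_poleGap (hpos : ∀ k, 0 < lam k) (hmono : StrictMono lam)
    (j : Fin m) : Ioi 0 ⊆ secularSum lam '' poleGap lam j := by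
  have hconn := (ordConnected_poleGap (lam := lam) j).isPreconnected
  have hcont := continuousOn_secularSum (fun k => (hpos k).le) (poleGap_subset_Ioi hpos j)
    (notMem_poleGap hmono.monotone j)
  have hleft := tendsto_secularSum_nhdsGT hpos hmono.injective j
  have hleft_le := le_principal_iff.2 (poleGap_mem_nhdsGT hmono j)
  by_cases h : (j : ℕ) + 1 < m
  · exact (subset_univ _).trans <| hconn.intermediate_value_Iii
      (le_principal_iff.2 (poleGap_mem_nhdsLT hmono j h)) hleft_le hcont
      (tendsto_secularSum_nhdsLT hpos hmono.injective _) hleft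
  · exact hconn.intermediate_value_Ioi (le_principal_iff.2 (poleGap_mem_atTop j h)) hleft_le
      hcont (tendsto_secularSum_atTop lam) hleft

end PoleGap

theorem stmt_13 (m : ℕ) (hm : 1 ≤ m) (lam : Fin m → ℝ)
    (hpos : ∀ j, 0 < lam j) (hmono : StrictMono lam) (μ : ℝ) (hμ : 0 < μ) :
    ∃ x : Fin m → ℝ,
      StrictMono x ∧
      (∀ j, lam j < x j) ∧
      (∀ j : Fin m, ∀ h : (j : ℕ) + 1 < m, x j < lam ⟨(j : ℕ) + 1, h⟩) ∧
      (∀ t : ℝ, 0 < t → (∀ j, t ≠ lam j) →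
        ((1 = μ * ∑ j, t / (t ^ 2 - lam j ^ 2)) ↔ ∃ j, t = x j)) ∧
      (∀ t : ℝ, 0 < t → t < lam ⟨0, hm⟩ →
        1 ≠ μ * ∑ j, t / (t ^ 2 - lam j ^ 2)) := by
  have : Nonempty (Fin m) := ⟨⟨0, hm⟩⟩
  have hsolves : ∀ t, 1 = μ * secularSum lam t ↔ secularSum lam t = μ⁻¹ := fun t =>
    eq_comm.trans ((mul_eq_one_iff_inv_eq₀ hμ.ne').trans eq_comm)
  choose x hx_mem hx_root using fun j =>
    Ioi_subset_image_secularSum_poleGap hpos hmono j (inv_pos.2 hμ)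
  have hno_root : ∀ t, 0 < t → (∀ k, t < lam k) → 1 ≠ μ * secularSum lam t :=
    fun t ht hlt h => (secularSum_neg ht hlt).not_ge (((hsolves t).1 h).symm ▸ (inv_pos.2 hμ).le)
  refine ⟨x, fun j k hjk => ((hx_mem j).2 k hjk).trans (hx_mem k).1, fun j => (hx_mem j).1,
    fun j h => (hx_mem j).2 _ (Fin.lt_def.2 (Nat.lt_succ_self _)),
    fun t ht hne => ⟨fun h => ?_, ?_⟩, fun t ht h0 => hno_root t ht fun k => ?_⟩
  · have hlt : ∃ k, lam k < t := by
      by_contra! hge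
      exact hno_root t ht (fun k => (hge k).lt_of_ne (hne k)) h
    obtain ⟨j, hj⟩ := exists_mem_poleGap hne hlt
    exact ⟨j, (strictAntiOn_secularSum_poleGap hpos hmono j).injOn hj (hx_mem j)
      (((hsolves t).1 h).trans (hx_root j).symm)⟩
  · rintro ⟨j, rfl⟩
    exact (hsolves _).2 (hx_root j)
  · exact h0.trans_le (hmono.monotone (Fin.le_def.2 k.val.zero_le))
end

section
/- Let n ≥ 0 and a ≥ 0 be integers, let x be a real number, and let 0 < ρ < 1. Then the contour integral (1/(2πi)) ∮_{|w+1|=ρ} e^{xw} w^n / (w + 1)^{n+a+1} dw equals (n!/(n+a)!) · e^{−x} · x^a · L_n^a(x). -/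
/-!
By Cauchy's formula for derivatives the integral is `(n+a)!⁻¹` times the `(n+a)`-th derivative
of the entire function `w ↦ wⁿ e^{xw}` at `w = -1`. The Leibniz rule expands that derivative as
a sum over `i ≤ n` of `binomial(n+a, i) · n!/(n-i)! · (-1)^(n-i) · x^(n+a-i) e^{-x}`, which is the
Laguerre sum after the substitution `i = n - k`.
-/

open Real Nat

/-- Generalized Laguerre polynomial
`L_n^a(x) = Σ_{k=0}^n (−1)^k binomial(n+a, n−k) x^k/k!`. -/
noncomputable def laguerreL (n a : ℕ) (x : ℝ) : ℝ :=
  ∑ k ∈ Finset.range (n + 1),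
    (-1 : ℝ) ^ k * (Nat.choose (n + a) (n - k) : ℝ) * x ^ k / (k ! : ℝ)

open Complex Finset

theorem iteratedDeriv_pow_mul_cexp_const_mul (n N : ℕ) (x c : ℂ) :
    iteratedDeriv N (fun w => w ^ n * exp (x * w)) c =
      ∑ i ∈ range (N + 1), N.choose i * (n.descFactorial i * c ^ (n - i)) *
        (x ^ (N - i) * exp (x * c)) := by
  rw [iteratedDeriv_fun_mul (by fun_prop) (by fun_prop)]
  simp only [iteratedDeriv_pow, iteratedDeriv_cexp_const_mul]

theorem iteratedDeriv_pow_mul_cexp_const_mul_neg_one (n a : ℕ) (x : ℂ) :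
    iteratedDeriv (n + a) (fun w => w ^ n * exp (x * w)) (-1) =
      n ! * exp (-x) * x ^ a *
        ∑ k ∈ range (n + 1), (-1) ^ k * ((n + a).choose (n - k) : ℂ) * x ^ k / k ! := by
  rw [iteratedDeriv_pow_mul_cexp_const_mul]
  -- terms with `i > n` vanish since `n.descFactorial i = 0`
  rw [← sum_subset (range_subset_range.mpr (by omega : n + 1 ≤ n + a + 1))
    (fun i _ hi => by simp [Nat.descFactorial_eq_zero_iff_lt.mpr (by simpa using hi)]),
    ← sum_range_reflect, mul_sum]
  refine sum_congr rfl fun k hk => ?_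
  have hkn : k ≤ n := by simpa [Nat.lt_succ_iff] using hk
  have hfact : (k ! : ℂ) * n.descFactorial (n - k) = n ! := by
    have := Nat.factorial_mul_descFactorial (Nat.sub_le n k)
    rw [Nat.sub_sub_self hkn] at this
    exact_mod_cast this
  have hk0 : (k ! : ℂ) ≠ 0 := mod_cast k.factorial_ne_zero
  rw [show n + 1 - 1 - k = n - k by omega, Nat.sub_sub_self hkn,
    show n + a - (n - k) = a + k by omega, ← hfact]
  field_simp
  ring

theorem ofReal_laguerreL (n a : ℕ) (x : ℝ) :
    (laguerreL n a x : ℂ) =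
      ∑ k ∈ range (n + 1), (-1) ^ k * ((n + a).choose (n - k) : ℂ) * (x : ℂ) ^ k / k ! := by
  simp [laguerreL]

theorem stmt_19_general (n a : ℕ) (x ρ : ℝ) (hρ0 : 0 < ρ) :
    (1 / (2 * π * Complex.I)) *
        (∮ w in C(-1, ρ), Complex.exp ((x : ℂ) * w) * w ^ n / (w + 1) ^ (n + a + 1))
      = ((((n ! : ℝ) / ((n + a)! : ℝ)) * Real.exp (-x) * x ^ a * laguerreL n a x : ℝ) : ℂ) := by
  have hf : Differentiable ℂ fun w : ℂ => w ^ n * Complex.exp (x * w) := by fun_prop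
  have hcauchy := (hf.differentiableOn (s := Metric.closedBall (-1) ρ))
    |>.circleIntegral_one_div_sub_center_pow_smul hρ0 (n + a)
  have hintegrand : (fun w : ℂ => Complex.exp (x * w) * w ^ n / (w + 1) ^ (n + a + 1)) =
      fun w => (1 / (w - -1) ^ (n + a + 1)) • (w ^ n * Complex.exp (x * w)) := by
    funext w
    rw [smul_eq_mul, sub_neg_eq_add]
    ring
  rw [hintegrand, hcauchy, iteratedDeriv_pow_mul_cexp_const_mul_neg_one, smul_eq_mul]
  push_cast [ofReal_laguerreL, ofReal_exp]
  field_simp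

theorem stmt_19 (n a : ℕ) (x ρ : ℝ) (hρ0 : 0 < ρ) (hρ1 : ρ < 1) :
    (1 / (2 * π * Complex.I)) *
        (∮ w in C(-1, ρ), Complex.exp ((x : ℂ) * w) * w ^ n / (w + 1) ^ (n + a + 1))
      = ((((n ! : ℝ) / ((n + a)! : ℝ)) * Real.exp (-x) * x ^ a * laguerreL n a x : ℝ) : ℂ) :=
  stmt_19_general n a x ρ hρ0
end
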